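/- If R = R¹ ∪ R² is a dominating set of πG with |R| = γ(G), and S¹ (resp. S²) denotes the set of vertices of G¹ (resp. G²) not dominated by R¹ (resp. R²) within their own copy, then S¹ and S² are 2-packings of G, each vertex of S¹ is matched under π to a vertex of R², and each vertex of S² is matched to a vertex of R¹; moreover no edge of G joins R¹ to S¹ or R² to S². -/

import Mathlib

/-! Let `R = R¹ ∪ R²` dominate `πG` with `|R| = γ(G)`. A vertex `v` of `G¹` that `R¹` misses can only be
dominated across the matching, so `π v ∈ R²`; hence `|S¹| ≤ |R²|` and `|R¹| + |S¹| ≤ γ(G)`. If two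
vertices `x, y ∈ S¹` had a common closed neighbour `z`, then `R¹ ∪ (S¹ \ {x, y}) ∪ {z}` would dominate
`G` with fewer than `γ(G)` vertices. Symmetrically for `S²`. -/

open SimpleGraph

variable {V : Type*}

/-- `A` dominates `B`: every vertex of `B` is in the closed neighborhood of some vertex of `A`. -/
def Dominates (G : SimpleGraph V) (A B : Set V) : Prop :=
  ∀ b ∈ B, ∃ a ∈ A, a = b ∨ G.Adj a b

/-- `D` is a dominating set of `G`. -/
def IsDomSet (G : SimpleGraph V) (D : Set V) : Prop :=
  Dominates G D Set.univ

/-- The domination number of `G`. -/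
noncomputable def domNum (G : SimpleGraph V) : ℕ :=
  sInf {n | ∃ D : Set V, IsDomSet G D ∧ D.ncard = n}

/-- The prism of `G` with respect to a permutation `π`: two disjoint copies of `G`
joined by the perfect matching `u – π u`. -/
def prism (G : SimpleGraph V) (π : Equiv.Perm V) : SimpleGraph (V ⊕ V) :=
  SimpleGraph.fromRel (fun a b =>
    match a, b with
    | Sum.inl u, Sum.inl v => G.Adj u v
    | Sum.inr u, Sum.inr v => G.Adj u v
    | Sum.inl u, Sum.inr v => v = π u
    | Sum.inr _, Sum.inl _ => False)

/-- `G` is a universal fixer. -/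
def IsUniversalFixer (G : SimpleGraph V) : Prop :=
  ∀ π : Equiv.Perm V, domNum (prism G π) = domNum G

/-- `D` is a γ-set (minimum dominating set) of `G`. -/
def IsGammaSet (G : SimpleGraph V) (D : Set V) : Prop :=
  IsDomSet G D ∧ D.ncard = domNum G

/-- `D = [D₁, D₂]` is a symmetric γ-set of `G`. -/
def IsSymGammaSet (G : SimpleGraph V) (D D1 D2 : Set V) : Prop :=
  IsGammaSet G D ∧ D = D1 ∪ D2 ∧ Disjoint D1 D2 ∧ D1.Nonempty ∧ D2.Nonempty ∧
    Dominates G D1 (Set.univ \ D2) ∧ Dominates G D2 (Set.univ \ D1)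

/-- `S` is a 2-packing: closed neighborhoods of distinct vertices of `S` are disjoint. -/
def IsTwoPacking (G : SimpleGraph V) (S : Set V) : Prop :=
  ∀ x ∈ S, ∀ y ∈ S, x ≠ y →
    Disjoint (insert x (G.neighborSet x)) (insert y (G.neighborSet y))

/-- `D` is an even symmetric γ-set of `G`. -/
def IsEvenSymGammaSet (G : SimpleGraph V) (D : Set V) : Prop :=
  ∃ D1 D2, IsSymGammaSet G D D1 D2 ∧ D1.ncard = D2.ncard

lemma domNum_le_ncard (G : SimpleGraph V) {D : Set V} (h : IsDomSet G D) :
    domNum G ≤ D.ncard :=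
  Nat.sInf_le ⟨D, h, rfl⟩

lemma isTwoPacking_of_ncard_add_ncard_le_domNum [Finite V] {G : SimpleGraph V} {R S : Set V}
    (hR : Dominates G R Sᶜ) (hcard : R.ncard + S.ncard ≤ domNum G) :
    IsTwoPacking G S := by
  intro x hx y hy hxy
  refine Set.disjoint_left.2 fun z hzx hzy => ?_
  have hsub : ({x, y} : Set V) ⊆ S := Set.pair_subset hx hy
  have hdom : IsDomSet G (insert z (R ∪ S \ {x, y})) := by
    intro b _
    by_cases hbxy : b = x ∨ b = y
    · refine ⟨z, Set.mem_insert z _, ?_⟩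
      rcases hbxy with rfl | rfl
      · exact hzx.imp id G.adj_symm
      · exact hzy.imp id G.adj_symm
    by_cases hbS : b ∈ S
    · exact ⟨b, Or.inr (Or.inr ⟨hbS, by simpa using hbxy⟩), Or.inl rfl⟩
    · obtain ⟨a, ha, hab⟩ := hR b hbS
      exact ⟨a, Or.inr (Or.inl ha), hab⟩
  have hdiff : (S \ {x, y}).ncard = S.ncard - 2 := by
    rw [Set.ncard_sdiff hsub, Set.ncard_pair hxy]
  have hS : 2 ≤ S.ncard := Set.ncard_pair hxy ▸ Set.ncard_le_ncard hsub
  have hγ := calc domNum G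
      ≤ (insert z (R ∪ S \ {x, y})).ncard := domNum_le_ncard G hdom
    _ ≤ R.ncard + (S \ {x, y}).ncard + 1 :=
        (Set.ncard_insert_le _ _).trans (Nat.add_le_add_right (Set.ncard_union_le _ _) 1)
  omega

lemma ncard_eq_ncard_preimage_inl_add_ncard_preimage_inr {W : Type*} [Finite V] [Finite W]
    (R : Set (V ⊕ W)) : R.ncard = (Sum.inl ⁻¹' R).ncard + (Sum.inr ⁻¹' R).ncard := by
  conv_lhs => rw [← Set.image_preimage_inl_union_image_preimage_inr R]
  rw [Set.ncard_union_eq Set.disjoint_image_inl_image_inr,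
    Set.ncard_image_of_injective _ Sum.inl_injective,
    Set.ncard_image_of_injective _ Sum.inr_injective]

section Prism

variable {G : SimpleGraph V} {π : Equiv.Perm V} {u v : V}

@[simp] lemma prism_adj_inl_inl : (prism G π).Adj (.inl u) (.inl v) ↔ G.Adj u v := by
  simpa [prism, G.adj_comm v u] using G.ne_of_adj

@[simp] lemma prism_adj_inr_inr : (prism G π).Adj (.inr u) (.inr v) ↔ G.Adj u v := by
  simpa [prism, G.adj_comm v u] using G.ne_of_adj

@[simp] lemma prism_adj_inr_inl : (prism G π).Adj (.inr u) (.inl v) ↔ u = π v := by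
  simp [prism]

@[simp] lemma prism_adj_inl_inr : (prism G π).Adj (.inl u) (.inr v) ↔ v = π u := by
  simp [prism]

lemma inr_mem_of_isDomSet_prism {R : Set (V ⊕ V)} (hR : IsDomSet (prism G π) R)
    (hv : ¬ ∃ d ∈ Sum.inl ⁻¹' R, d = v ∨ G.Adj d v) : Sum.inr (π v) ∈ R := by
  obtain ⟨a | a, ha, hav⟩ := hR (.inl v) trivial
  · exact absurd ⟨a, ha, by simpa using hav⟩ hv
  · simp only [reduceCtorEq, prism_adj_inr_inl, false_or] at hav
    exact hav ▸ ha

lemma inl_mem_of_isDomSet_prism {R : Set (V ⊕ V)} (hR : IsDomSet (prism G π) R)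
    (hv : ¬ ∃ d ∈ Sum.inr ⁻¹' R, d = v ∨ G.Adj d v) : Sum.inl (π.symm v) ∈ R := by
  obtain ⟨a | a, ha, hav⟩ := hR (.inr v) trivial
  · simp only [reduceCtorEq, prism_adj_inl_inr, false_or] at hav
    subst hav
    simpa using ha
  · exact absurd ⟨a, ha, by simpa using hav⟩ hv

end Prism

theorem stmt_19 [Fintype V] (G : SimpleGraph V) (π : Equiv.Perm V)
    (R : Set (V ⊕ V)) (hdom : IsDomSet (prism G π) R)
    (hcard : R.ncard = domNum G)
    (R1 R2 S1 S2 : Set V)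
    (hR1 : R1 = {v | Sum.inl v ∈ R}) (hR2 : R2 = {v | Sum.inr v ∈ R})
    (hS1 : S1 = {v | ¬ ∃ d ∈ R1, d = v ∨ G.Adj d v})
    (hS2 : S2 = {v | ¬ ∃ d ∈ R2, d = v ∨ G.Adj d v}) :
    IsTwoPacking G S1 ∧ IsTwoPacking G S2 ∧
    (∀ v ∈ S1, π v ∈ R2) ∧ (∀ v ∈ S2, π.symm v ∈ R1) ∧
    (∀ u ∈ R1, ∀ v ∈ S1, ¬ G.Adj u v) ∧
    (∀ u ∈ R2, ∀ v ∈ S2, ¬ G.Adj u v) := by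
  have hmatch1 : ∀ v ∈ S1, π v ∈ R2 := by
    subst hR1 hR2 hS1; exact fun v hv => inr_mem_of_isDomSet_prism hdom hv
  have hmatch2 : ∀ v ∈ S2, π.symm v ∈ R1 := by
    subst hR1 hR2 hS2; exact fun v hv => inl_mem_of_isDomSet_prism hdom hv
  have hS1R2 := Set.ncard_le_ncard_of_injOn π hmatch1 π.injective.injOn
  have hS2R1 := Set.ncard_le_ncard_of_injOn π.symm hmatch2 π.symm.injective.injOn
  have hsplit : R1.ncard + R2.ncard = domNum G := by
    subst hR1 hR2; rw [← hcard, ncard_eq_ncard_preimage_inl_add_ncard_preimage_inr R]; rfl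
  have hdom1 : Dominates G R1 S1ᶜ := by subst hS1; exact fun v hv => not_not.1 hv
  have hdom2 : Dominates G R2 S2ᶜ := by subst hS2; exact fun v hv => not_not.1 hv
  refine ⟨isTwoPacking_of_ncard_add_ncard_le_domNum hdom1 (by omega),
    isTwoPacking_of_ncard_add_ncard_le_domNum hdom2 (by omega), hmatch1, hmatch2, ?_, ?_⟩
  · subst hS1; exact fun u hu v hv huv => hv ⟨u, hu, .inr huv⟩
  · subst hS2; exact fun u hu v hv huv => hv ⟨u, hu, .inr huv⟩
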